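/- Fix β ∈ (0,1) and N ≥ 1. For any T ≥ 1 and any sequence of binary losses l_{t,i} ∈ {0,1}, the Randomized Weighted-Majority algorithm satisfies 𝓛_T^min · log β ≤ log N − (1 − β)·𝓛_T. -/

import Mathlib

open Finset Real

/-- Weight of expert `i` in the Randomized Weighted-Majority algorithm.
Rounds are indexed starting from `0`, so `rwmWeight β l i t` is the weight
`w_{t+1, i}` of the paper: the initial weight (`t = 0`) is `1`, and the weight is
multiplied by `β` each time the expert incurs a loss of `1`. -/
noncomputable def rwmWeight (β : ℝ) (l : ℕ → ℕ → ℝ) (i : ℕ) : ℕ → ℝ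
  | 0 => 1
  | t + 1 => if l t i = 1 then β * rwmWeight β l i t else rwmWeight β l i t

/-- Total weight `W_{t+1} = ∑_{i=1}^N w_{t+1, i}`. -/
noncomputable def rwmTotalWeight (β : ℝ) (l : ℕ → ℕ → ℝ) (N t : ℕ) : ℝ :=
  ∑ i ∈ Finset.range N, rwmWeight β l i t

/-- Expected loss of the RWM algorithm at round `t`:
`L_t = ∑_{i=1}^N p_{t,i} l_{t,i}` with `p_{t,i} = w_{t,i} / W_t`. -/
noncomputable def rwmRoundLoss (β : ℝ) (l : ℕ → ℕ → ℝ) (N t : ℕ) : ℝ :=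
  ∑ i ∈ Finset.range N, (rwmWeight β l i t / rwmTotalWeight β l N t) * l t i

/-- Cumulative expected loss `𝓛_T = ∑_{t=1}^T L_t` of the RWM algorithm. -/
noncomputable def rwmCumLoss (β : ℝ) (l : ℕ → ℕ → ℝ) (N T : ℕ) : ℝ :=
  ∑ t ∈ Finset.range T, rwmRoundLoss β l N t

/-- Cumulative loss `𝓛_{T,i} = ∑_{t=1}^T l_{t,i}` of expert `i`. -/
noncomputable def rwmExpertLoss (l : ℕ → ℕ → ℝ) (i T : ℕ) : ℝ :=
  ∑ t ∈ Finset.range T, l t i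

/-!
Potential argument on the total weight `W_t`. Each round multiplies `W_t` by
`1 - (1 - β) L_t ≤ exp (-(1 - β) L_t)`, so `log W_T ≤ log N - (1 - β) 𝓛_T`; on the other
hand `W_T` dominates the weight `β ^ 𝓛_{T,i}` of the best expert.
-/

section

variable {β : ℝ} (l : ℕ → ℕ → ℝ)

lemma rwmWeight_pos (hβ : 0 < β) (i t : ℕ) : 0 < rwmWeight β l i t := by
  induction t with
  | zero => norm_num [rwmWeight]
  | succ t ih =>
    simp only [rwmWeight]
    split <;> positivity

lemma rwmTotalWeight_pos (hβ : 0 < β) {N : ℕ} (hN : 0 < N) (t : ℕ) :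
    0 < rwmTotalWeight β l N t :=
  Finset.sum_pos (fun i _ => rwmWeight_pos l hβ i t) (Finset.nonempty_range_iff.mpr hN.ne')

lemma rwmTotalWeight_zero (N : ℕ) : rwmTotalWeight β l N 0 = N := by
  simp [rwmTotalWeight, rwmWeight]

lemma rwmWeight_succ_of_binary {i t : ℕ} (h : l t i = 0 ∨ l t i = 1) :
    rwmWeight β l i (t + 1) = rwmWeight β l i t * (1 - (1 - β) * l t i) := by
  rcases h with h | h
  · simp [rwmWeight, h]
  · simp only [rwmWeight, h, if_true]
    ring

lemma log_rwmWeight_succ_of_binary (hβ : 0 < β) {i t : ℕ} (h : l t i = 0 ∨ l t i = 1) :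
    Real.log (rwmWeight β l i (t + 1)) = Real.log (rwmWeight β l i t) + l t i * Real.log β := by
  rcases h with h | h
  · simp [rwmWeight, h]
  · simp only [rwmWeight, h, if_true, one_mul]
    rw [Real.log_mul hβ.ne' (rwmWeight_pos l hβ i t).ne', add_comm]

lemma log_rwmWeight (hβ : 0 < β) {i T : ℕ} (hl : ∀ t < T, l t i = 0 ∨ l t i = 1) :
    Real.log (rwmWeight β l i T) = rwmExpertLoss l i T * Real.log β := by
  have hstep : ∀ t ∈ Finset.range T, Real.log (rwmWeight β l i (t + 1))
      - Real.log (rwmWeight β l i t) = l t i * Real.log β := fun t ht => by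
    rw [log_rwmWeight_succ_of_binary l hβ (hl t (Finset.mem_range.mp ht))]
    ring
  have := Finset.sum_range_sub (fun t => Real.log (rwmWeight β l i t)) T
  rw [Finset.sum_congr rfl hstep] at this
  simp only [rwmWeight, Real.log_one, sub_zero] at this
  rw [← this, rwmExpertLoss, Finset.sum_mul]

lemma rwmTotalWeight_succ_of_binary (hβ : 0 < β) {N t : ℕ} (hN : 0 < N)
    (hl : ∀ i < N, l t i = 0 ∨ l t i = 1) :
    rwmTotalWeight β l N (t + 1)
      = rwmTotalWeight β l N t * (1 - (1 - β) * rwmRoundLoss β l N t) := by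
  have hW := (rwmTotalWeight_pos l hβ hN t).ne'
  have hweighted : rwmTotalWeight β l N t * rwmRoundLoss β l N t
      = ∑ i ∈ Finset.range N, rwmWeight β l i t * l t i := by
    rw [rwmRoundLoss, Finset.mul_sum]
    exact Finset.sum_congr rfl fun i _ => by field_simp
  rw [mul_sub, mul_one, mul_left_comm, hweighted, Finset.mul_sum, rwmTotalWeight,
    rwmTotalWeight, ← Finset.sum_sub_distrib]
  refine Finset.sum_congr rfl fun i hi => ?_
  rw [rwmWeight_succ_of_binary l (hl i (Finset.mem_range.mp hi))]
  ring

lemma log_rwmTotalWeight_succ_le (hβ : 0 < β) {N t : ℕ} (hN : 0 < N)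
    (hl : ∀ i < N, l t i = 0 ∨ l t i = 1) :
    Real.log (rwmTotalWeight β l N (t + 1))
      ≤ Real.log (rwmTotalWeight β l N t) - (1 - β) * rwmRoundLoss β l N t := by
  have hstep := rwmTotalWeight_succ_of_binary l hβ hN hl
  have hW := rwmTotalWeight_pos l hβ hN t
  have hfactor : 0 < 1 - (1 - β) * rwmRoundLoss β l N t := by
    have := rwmTotalWeight_pos l hβ hN (t + 1)
    rw [hstep] at this
    exact pos_of_mul_pos_right this hW.le
  rw [hstep, Real.log_mul hW.ne' hfactor.ne']
  linarith [Real.log_le_sub_one_of_pos hfactor]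

lemma log_rwmTotalWeight_le (hβ : 0 < β) {N T : ℕ} (hN : 0 < N)
    (hl : ∀ t < T, ∀ i < N, l t i = 0 ∨ l t i = 1) :
    Real.log (rwmTotalWeight β l N T) ≤ Real.log N - (1 - β) * rwmCumLoss β l N T := by
  have htelescope := Finset.sum_range_sub (fun t => Real.log (rwmTotalWeight β l N t)) T
  have hsum : ∑ t ∈ Finset.range T, (Real.log (rwmTotalWeight β l N (t + 1))
      - Real.log (rwmTotalWeight β l N t))
        ≤ ∑ t ∈ Finset.range T, -((1 - β) * rwmRoundLoss β l N t) :=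
    Finset.sum_le_sum fun t ht => by
      linarith [log_rwmTotalWeight_succ_le l hβ hN (hl t (Finset.mem_range.mp ht))]
  rw [htelescope, Finset.sum_neg_distrib, ← Finset.mul_sum, rwmTotalWeight_zero] at hsum
  rw [rwmCumLoss]
  linarith

end

/-- for `β ∈ (0,1)`, `N ≥ 1`, `T ≥ 1` and binary losses,
`𝓛_T^min · log β ≤ log N − (1 − β) 𝓛_T`. -/
theorem rwm_log_potential_bound (β : ℝ) (hβ₁ : 0 < β)
    (N T : ℕ) (hN : 1 ≤ N) (l : ℕ → ℕ → ℝ)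
    (hl : ∀ t < T, ∀ i < N, l t i = 0 ∨ l t i = 1) :
    (Finset.range N).inf' (Finset.nonempty_range_iff.mpr (by omega))
        (fun i => rwmExpertLoss l i T) * Real.log β
      ≤ Real.log N - (1 - β) * rwmCumLoss β l N T := by
  obtain ⟨i, hi, hmin⟩ := Finset.exists_mem_eq_inf' (Finset.nonempty_range_iff.mpr
    (by omega : N ≠ 0)) (fun i => rwmExpertLoss l i T)
  have hiN : i < N := Finset.mem_range.mp hi
  have hweight_le : rwmWeight β l i T ≤ rwmTotalWeight β l N T :=
    Finset.single_le_sum (fun j _ => (rwmWeight_pos l hβ₁ j T).le) hi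
  rw [hmin, ← log_rwmWeight l hβ₁ fun t ht => hl t ht i hiN]
  calc Real.log (rwmWeight β l i T)
      ≤ Real.log (rwmTotalWeight β l N T) :=
        Real.log_le_log (rwmWeight_pos l hβ₁ i T) hweight_le
    _ ≤ Real.log N - (1 - β) * rwmCumLoss β l N T := log_rwmTotalWeight_le l hβ₁ hN hl
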